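/- arXiv:2311.14023 — 3 statements merged into one kernel-verified Lean document; each statement's English description precedes it below -/
import Mathlib

section
/- Let A and Â be n×n real SPSD matrices with A ⪰ Â ⪰ 0, let 1 ≤ k < n and ε ≥ 0, and suppose that ‖A − Â_(k)‖_* ≤ (1+ε)‖A − A_(k)‖_*. Then for every continuous operator monotone function f : [0,∞) → [0,∞), ‖f(A) − f(Â)_(k)‖_* ≤ (1+ε)‖f(A) − f(A)_(k)‖_*. -/
open Matrix BigOperators

/-- `M = U * diagonal μ * Uᵀ` is a spectral (eigen)decomposition of the symmetric matrix `M`,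
with orthogonal `U` and eigenvalues `μ` listed in nonincreasing order. -/
def IsSpectralDecomp {n : ℕ} (M U : Matrix (Fin n) (Fin n) ℝ) (μ : Fin n → ℝ) : Prop :=
  Uᵀ * U = 1 ∧ Antitone μ ∧ M = U * Matrix.diagonal μ * Uᵀ

/-- Truncation of a spectral decomposition to its `k` largest (first `k`) eigenvalues:
the best rank-`k` approximation `M_(k)` associated with the decomposition `(U, μ)`. -/
noncomputable def trunc {n : ℕ} (k : ℕ) (U : Matrix (Fin n) (Fin n) ℝ) (μ : Fin n → ℝ) :
    Matrix (Fin n) (Fin n) ℝ :=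
  U * Matrix.diagonal (fun i : Fin n => if (i : ℕ) < k then μ i else 0) * Uᵀ

/-- `f` is operator monotone on SPSD matrices: for all `m` and all `m × m` SPSD matrices
`B ⪰ C ⪰ 0`, one has `f(B) ⪰ f(C)`, where matrix functions are computed through (any)
spectral decomposition. -/
def OperatorMonotone (f : ℝ → ℝ) : Prop :=
  ∀ (m : ℕ) (B C U V : Matrix (Fin m) (Fin m) ℝ) (β γ : Fin m → ℝ),
    IsSpectralDecomp B U β → IsSpectralDecomp C V γ →
    B.PosSemidef → C.PosSemidef → (B - C).PosSemidef →
    (U * Matrix.diagonal (f ∘ β) * Uᵀ - V * Matrix.diagonal (f ∘ γ) * Vᵀ).PosSemidef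

/-- Squared Frobenius norm `‖M‖_F² = Σ_{i,j} M_{ij}²`. -/
noncomputable def frobSq {m l : ℕ} (M : Matrix (Fin m) (Fin l) ℝ) : ℝ :=
  ∑ i, ∑ j, (M i j) ^ 2

/-- Frobenius norm. -/
noncomputable def frobNorm {m l : ℕ} (M : Matrix (Fin m) (Fin l) ℝ) : ℝ :=
  Real.sqrt (frobSq M)

/-- The eigenvalues of a Hermitian matrix listed in nonincreasing order:
`eigsDesc hM i` is the `(i+1)`-st largest eigenvalue of `M`. -/
noncomputable def eigsDesc {m : ℕ} {M : Matrix (Fin m) (Fin m) ℝ} (hM : M.IsHermitian) :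
    Fin m → ℝ :=
  fun i => (hM.eigenvalues ∘ Tuple.sort hM.eigenvalues) i.rev

/-- The singular values of `M` in nonincreasing order: `svDesc M i` is the `(i+1)`-st largest
singular value of `M`, i.e. the square root of the `(i+1)`-st largest eigenvalue of `MᴴM`. -/
noncomputable def svDesc {m l : ℕ} (M : Matrix (Fin m) (Fin l) ℝ) : Fin l → ℝ :=
  fun i => Real.sqrt (eigsDesc (show (Mᵀ * M).IsHermitian by
    have h := Matrix.isHermitian_conjTranspose_mul_self M
    rwa [Matrix.conjTranspose_eq_transpose_of_trivial] at h) i)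

/-- Nuclear norm: the sum of the singular values. -/
noncomputable def nuclearNorm {m l : ℕ} (M : Matrix (Fin m) (Fin l) ℝ) : ℝ :=
  ∑ i, svDesc M i

/-- Operator (spectral) norm: the largest singular value. -/
noncomputable def opNorm {m l : ℕ} (M : Matrix (Fin m) (Fin l) ℝ) : ℝ :=
  ⨆ i, svDesc M i

/-- `p`-th power of the Schatten `p`-norm: `‖M‖_(p)^p = Σᵢ σᵢ(M)^p`. -/
noncomputable def schattenPow {m l : ℕ} (p : ℝ) (M : Matrix (Fin m) (Fin l) ℝ) : ℝ :=
  ∑ i, svDesc M i ^ p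

/-- Schatten `p`-norm: `‖M‖_(p) = (Σᵢ σᵢ(M)^p)^(1/p)`. -/
noncomputable def schattenNorm {m l : ℕ} (p : ℝ) (M : Matrix (Fin m) (Fin l) ℝ) : ℝ :=
  (schattenPow p M) ^ (1 / p)

/-- `P` is the orthogonal projection onto the column space of `M`. -/
def IsOrthProjOnto {m l : ℕ} (P : Matrix (Fin m) (Fin m) ℝ) (M : Matrix (Fin m) (Fin l) ℝ) :
    Prop :=
  Pᵀ = P ∧ P * P = P ∧ P * M = M ∧ ∃ Y : Matrix (Fin l) (Fin m) ℝ, P = M * Y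

/-!
Weyl's monotonicity principle turns `A ⪰ Â` into `νᵢ ≤ μᵢ`, and operator monotonicity gives
`f(A) ⪰ f(Â)`. Hence every matrix whose nuclear norm appears is positive semidefinite, its nuclear
norm is its trace, and the hypothesis and the claim become
`∑_{i<k} (μᵢ - νᵢ) ≤ ε ∑_{i≥k} μᵢ` and `∑_{i<k} (f μᵢ - f νᵢ) ≤ ε ∑_{i≥k} f μᵢ`.
Testing operator monotonicity on `2 × 2` matrices shows that `f x / x` is nonincreasing, so with
`r = f μₖ / μₖ` (indices from `0`) one has `f μᵢ - f νᵢ ≤ r (μᵢ - νᵢ)` for `i < k` and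
`r μᵢ ≤ f μᵢ` for `i ≥ k`.
-/

open Finset

section Orthogonal

variable {n : ℕ} {U : Matrix (Fin n) (Fin n) ℝ}

theorem trace_mul_diagonal_mul_transpose (hU : Uᵀ * U = 1) (g : Fin n → ℝ) :
    (U * diagonal g * Uᵀ).trace = ∑ i, g i := by
  rw [trace_mul_cycle, hU, one_mul, trace_diagonal]

theorem posSemidef_mul_diagonal_mul_transpose (U : Matrix (Fin n) (Fin n) ℝ) {g : Fin n → ℝ}
    (hg : 0 ≤ g) : (U * diagonal g * Uᵀ).PosSemidef := by
  simpa using (posSemidef_diagonal_iff.mpr hg).mul_mul_conjTranspose_same U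

theorem dotProduct_mul_diagonal_mul_transpose_mulVec (U : Matrix (Fin n) (Fin n) ℝ)
    (g x : Fin n → ℝ) :
    x ⬝ᵥ ((U * diagonal g * Uᵀ) *ᵥ x) = ∑ j, g j * (Uᵀ *ᵥ x) j ^ 2 := by
  rw [← mulVec_mulVec, ← mulVec_mulVec, dotProduct_mulVec, ← mulVec_transpose]
  simp [dotProduct, mulVec_diagonal, sq, mul_left_comm]

theorem sum_sq_transpose_mulVec (hU : Uᵀ * U = 1) (x : Fin n → ℝ) :
    ∑ j, (Uᵀ *ᵥ x) j ^ 2 = ∑ j, x j ^ 2 := by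
  have h : (Uᵀ *ᵥ x) ⬝ᵥ (Uᵀ *ᵥ x) = x ⬝ᵥ x := by
    rw [dotProduct_mulVec, ← mulVec_transpose, transpose_transpose, mulVec_mulVec,
      mul_eq_one_comm.mp hU, one_mulVec]
  simpa [dotProduct, sq] using h

theorem IsSpectralDecomp.nonneg {M : Matrix (Fin n) (Fin n) ℝ} {μ : Fin n → ℝ}
    (h : IsSpectralDecomp M U μ) (hM : M.PosSemidef) : 0 ≤ μ := by
  obtain ⟨hU, -, rfl⟩ := h
  have hconj : Uᵀ * (U * diagonal μ * Uᵀ) * U = diagonal μ := by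
    simp only [Matrix.mul_assoc, hU, Matrix.mul_one, ← Matrix.mul_assoc Uᵀ U, Matrix.one_mul]
  have := hM.conjTranspose_mul_mul_same U
  rw [conjTranspose_eq_transpose_of_trivial, hconj] at this
  exact posSemidef_diagonal_iff.mp this

end Orthogonal

theorem isHermitian_transpose_mul_self {m l : ℕ} (M : Matrix (Fin m) (Fin l) ℝ) :
    (Mᵀ * M).IsHermitian := by
  simpa using Matrix.isHermitian_conjTranspose_mul_self M

theorem nuclearNorm_eq_sum_sqrt_eigenvalues {m l : ℕ} (M : Matrix (Fin m) (Fin l) ℝ) :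
    nuclearNorm M = ∑ i, √((isHermitian_transpose_mul_self M).eigenvalues i) := by
  let hM := isHermitian_transpose_mul_self M
  exact Equiv.sum_comp (Fin.revPerm.trans (Tuple.sort hM.eigenvalues))
    (fun j => √(hM.eigenvalues j))

open Polynomial in
theorem Matrix.PosSemidef.eigenvalues_transpose_mul_self {n : ℕ}
    {M : Matrix (Fin n) (Fin n) ℝ} (hM : M.PosSemidef) :
    univ.val.map (isHermitian_transpose_mul_self M).eigenvalues =
      univ.val.map (fun i => hM.1.eigenvalues i ^ 2) := by
  have hMM : Mᵀ * M = cfc (fun x : ℝ => x ^ 2) M := by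
    rw [cfc_pow_id M 2 hM.1.isSelfAdjoint, sq, ← conjTranspose_eq_transpose_of_trivial, hM.1.eq]
  have h := hM.1.charpoly_cfc_eq (fun x : ℝ => x ^ 2)
  rw [← hMM, (isHermitian_transpose_mul_self M).charpoly_eq] at h
  simpa [roots_prod, prod_ne_zero_iff, X_sub_C_ne_zero, -map_pow] using congrArg roots h

theorem nuclearNorm_of_posSemidef {n : ℕ} {M : Matrix (Fin n) (Fin n) ℝ} (hM : M.PosSemidef) :
    nuclearNorm M = M.trace := by
  have h := congrArg (fun s => (s.map Real.sqrt).sum) hM.eigenvalues_transpose_mul_self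
  simp only [Multiset.map_map] at h
  rw [nuclearNorm_eq_sum_sqrt_eigenvalues, hM.1.trace_eq_sum_eigenvalues]
  refine h.trans (Finset.sum_congr rfl fun i _ => ?_)
  simp [Real.sqrt_sq (hM.eigenvalues_nonneg i)]

section Weyl

variable {n : ℕ}

-- `n - 1` linear conditions on a vector of `ℝⁿ`.
theorem exists_ne_zero_transpose_mulVec_eq_zero (U V : Matrix (Fin n) (Fin n) ℝ) (i : Fin n) :
    ∃ x ≠ 0, (∀ j < i, (Uᵀ *ᵥ x) j = 0) ∧ ∀ j, i < j → (Vᵀ *ᵥ x) j = 0 := by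
  let W : Matrix {j : Fin n // j ≠ i} (Fin n) ℝ :=
    Matrix.of fun j t => if j.1 < i then U t j else V t j
  have hker : LinearMap.ker W.mulVecLin ≠ ⊥ := by
    apply LinearMap.ker_ne_bot_of_finrank_lt
    simpa [Fintype.card_subtype_compl] using i.pos
  obtain ⟨x, hx, hx0⟩ := Submodule.ne_bot_iff _ |>.mp hker
  have hWx (j : Fin n) (hj : j ≠ i) : (W *ᵥ x) ⟨j, hj⟩ = 0 := by
    rw [LinearMap.mem_ker, mulVecLin_apply] at hx
    rw [hx]; rfl
  refine ⟨x, hx0, fun j hj => ?_, fun j hj => ?_⟩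
  · simpa [W, mulVec, dotProduct, hj] using hWx j hj.ne
  · simpa [W, mulVec, dotProduct, hj.not_gt] using hWx j hj.ne'

theorem sum_mul_sq_le_of_antitone {μ z : Fin n → ℝ} (hμ : Antitone μ) {i : Fin n}
    (hz : ∀ j < i, z j = 0) : ∑ j, μ j * z j ^ 2 ≤ μ i * ∑ j, z j ^ 2 := by
  rw [mul_sum]
  refine sum_le_sum fun j _ => ?_
  rcases lt_or_ge j i with hj | hj
  · simp [hz j hj]
  · exact mul_le_mul_of_nonneg_right (hμ hj) (sq_nonneg _)

theorem mul_sum_sq_le_of_antitone {ν y : Fin n → ℝ} (hν : Antitone ν) {i : Fin n}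
    (hy : ∀ j, i < j → y j = 0) : ν i * ∑ j, y j ^ 2 ≤ ∑ j, ν j * y j ^ 2 := by
  rw [mul_sum]
  refine sum_le_sum fun j _ => ?_
  rcases lt_or_ge i j with hj | hj
  · simp [hy j hj]
  · exact mul_le_mul_of_nonneg_right (hν hj) (sq_nonneg _)

theorem IsSpectralDecomp.le_of_posSemidef_sub {A B U V : Matrix (Fin n) (Fin n) ℝ}
    {μ ν : Fin n → ℝ} (hA : IsSpectralDecomp A U μ) (hB : IsSpectralDecomp B V ν)
    (hAB : (A - B).PosSemidef) : ν ≤ μ := by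
  obtain ⟨hU, hμ, rfl⟩ := hA
  obtain ⟨hV, hν, rfl⟩ := hB
  intro i
  obtain ⟨x, hx0, hUx, hVx⟩ := exists_ne_zero_transpose_mulVec_eq_zero U V i
  have hquad : x ⬝ᵥ ((V * diagonal ν * Vᵀ) *ᵥ x) ≤ x ⬝ᵥ ((U * diagonal μ * Uᵀ) *ᵥ x) := by
    have := hAB.dotProduct_mulVec_nonneg x
    rwa [star_trivial, sub_mulVec, dotProduct_sub, sub_nonneg] at this
  rw [dotProduct_mul_diagonal_mul_transpose_mulVec,
    dotProduct_mul_diagonal_mul_transpose_mulVec] at hquad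
  have hpos : 0 < ∑ j, x j ^ 2 := by
    obtain ⟨j, hj⟩ := Function.ne_iff.mp hx0
    exact sum_pos' (fun j _ => sq_nonneg _) ⟨j, mem_univ _, by simpa [sq_pos_iff] using hj⟩
  refine le_of_mul_le_mul_right ?_ hpos
  calc ν i * ∑ j, x j ^ 2 = ν i * ∑ j, (Vᵀ *ᵥ x) j ^ 2 := by rw [sum_sq_transpose_mulVec hV]
    _ ≤ ∑ j, ν j * (Vᵀ *ᵥ x) j ^ 2 := mul_sum_sq_le_of_antitone hν hVx
    _ ≤ ∑ j, μ j * (Uᵀ *ᵥ x) j ^ 2 := hquad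
    _ ≤ μ i * ∑ j, (Uᵀ *ᵥ x) j ^ 2 := sum_mul_sq_le_of_antitone hμ hUx
    _ = μ i * ∑ j, x j ^ 2 := by rw [sum_sq_transpose_mulVec hU]

end Weyl

section OperatorMonotone

variable {f : ℝ → ℝ}

theorem OperatorMonotone.monotoneOn (hf : OperatorMonotone f) : MonotoneOn f (Set.Ici 0) := by
  intro x hx y _ hxy
  have hdec (t : ℝ) : IsSpectralDecomp (diagonal fun _ : Fin 1 => t) 1 fun _ => t :=
    ⟨by simp, antitone_const, by simp⟩
  have hpsd {t : ℝ} (ht : 0 ≤ t) : (diagonal fun _ : Fin 1 => t).PosSemidef :=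
    posSemidef_diagonal_iff.mpr fun _ => ht
  have h := hf 1 _ _ _ _ _ _ (hdec y) (hdec x) (hpsd (le_trans hx hxy)) (hpsd hx)
    (by simpa [diagonal_sub] using hpsd (sub_nonneg.mpr hxy))
  simp only [transpose_one, Matrix.one_mul, Matrix.mul_one, diagonal_sub] at h
  simpa using posSemidef_diagonal_iff.mp h 0

theorem posSemidef_of_fin_two {p q r : ℝ} (hp : 0 ≤ p) (hr : 0 ≤ r) (hdet : q ^ 2 ≤ p * r) :
    (!![p, q; q, r]).PosSemidef := by
  rw [posSemidef_iff_dotProduct_mulVec]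
  refine ⟨by ext i j; fin_cases i <;> fin_cases j <;> rfl, fun x => ?_⟩
  have hquad : star x ⬝ᵥ (!![p, q; q, r] *ᵥ x) =
      p * x 0 ^ 2 + 2 * q * (x 0 * x 1) + r * x 1 ^ 2 := by
    simp [mulVec, dotProduct, Fin.sum_univ_two]
    ring
  rw [hquad]
  rcases hp.eq_or_lt with rfl | hp
  · obtain rfl : q = 0 := by nlinarith
    nlinarith [sq_nonneg (x 1)]
  · nlinarith [sq_nonneg (p * x 0 + q * x 1), mul_nonneg (sub_nonneg.mpr hdet) (sq_nonneg (x 1))]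

theorem transpose_rotation (c s : ℝ) : (!![c, -s; s, c])ᵀ = !![c, s; -s, c] := by
  ext i j
  fin_cases i <;> fin_cases j <;> rfl

theorem transpose_mul_self_rotation {c s : ℝ} (hcs : c ^ 2 + s ^ 2 = 1) :
    (!![c, -s; s, c])ᵀ * !![c, -s; s, c] = 1 := by
  rw [transpose_rotation, mul_fin_two, one_fin_two]
  ext i j
  fin_cases i <;> fin_cases j <;> simp <;> linarith

theorem diagonal_sub_rotation_mul_diagonal_mul_transpose (a d b c s : ℝ) :
    diagonal ![a, d] - !![c, -s; s, c] * diagonal ![b, 0] * (!![c, -s; s, c])ᵀ =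
      !![a - b * c ^ 2, -(b * c * s); -(b * c * s), d - b * s ^ 2] := by
  rw [transpose_rotation, diagonal_fin_two, diagonal_fin_two, mul_fin_two, mul_fin_two]
  ext i j
  fin_cases i <;> fin_cases j <;> simp [sq, mul_comm, mul_left_comm]

theorem OperatorMonotone.mul_add_mul_le_of_fin_two (hf : OperatorMonotone f) (hf0 : 0 ≤ f 0)
    {a d b c s : ℝ} (hcs : c ^ 2 + s ^ 2 = 1) (hd : 0 ≤ d) (hda : d ≤ a) (hb : 0 ≤ b)
    (hbc : b * c ^ 2 ≤ a) (hbs : b * s ^ 2 ≤ d) (hdet : b * (a * s ^ 2 + d * c ^ 2) ≤ a * d) :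
    f b * (f a * s ^ 2 + f d * c ^ 2) ≤ f a * f d := by
  set R : Matrix (Fin 2) (Fin 2) ℝ := !![c, -s; s, c]
  have hR : Rᵀ * R = 1 := transpose_mul_self_rotation hcs
  have hanti (x y : ℝ) (h : y ≤ x) : Antitone ![x, y] := by
    intro i j hij
    fin_cases i <;> fin_cases j <;> simp_all
  have hdecB : IsSpectralDecomp (diagonal ![a, d]) 1 ![a, d] :=
    ⟨by simp, hanti a d hda, by simp⟩
  have hdecC : IsSpectralDecomp (R * diagonal ![b, 0] * Rᵀ) R ![b, 0] :=
    ⟨hR, hanti b 0 hb, rfl⟩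
  have hpsdB : (diagonal ![a, d]).PosSemidef :=
    posSemidef_diagonal_iff.mpr fun i => by fin_cases i <;> simp <;> linarith
  have hpsdC : (R * diagonal ![b, 0] * Rᵀ).PosSemidef :=
    posSemidef_mul_diagonal_mul_transpose R fun i => by fin_cases i <;> simp [hb]
  have hpsdBC : (diagonal ![a, d] - R * diagonal ![b, 0] * Rᵀ).PosSemidef := by
    rw [diagonal_sub_rotation_mul_diagonal_mul_transpose]
    refine posSemidef_of_fin_two (by linarith) (by linarith) ?_
    nlinarith
  -- Adding `f 0` times the projection orthogonal to `v = (c, s)` turns `f(B) - f(C)` into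
  -- `diag(f a, f d) - f b vvᵀ`, whose determinant is the claim.
  have hmono := hf 2 _ _ _ _ _ _ hdecB hdecC hpsdB hpsdC hpsdBC
  have hf0R : (R * diagonal ![0, f 0] * Rᵀ).PosSemidef :=
    posSemidef_mul_diagonal_mul_transpose R fun i => by fin_cases i <;> simp [hf0]
  have hsplit : diagonal (f ∘ ![b, 0]) = diagonal ![f b, 0] + diagonal ![0, f 0] := by
    ext i j; fin_cases i <;> fin_cases j <;> simp [diagonal]
  have hcomp : f ∘ ![a, d] = ![f a, f d] := by ext i; fin_cases i <;> rfl
  have key := hmono.add hf0R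
  rw [hsplit, hcomp, Matrix.mul_add, Matrix.add_mul, sub_add_eq_sub_sub, sub_add_cancel,
    transpose_one, Matrix.one_mul, Matrix.mul_one,
    diagonal_sub_rotation_mul_diagonal_mul_transpose] at key
  have := key.det_nonneg
  rw [det_fin_two_of] at this
  nlinarith

theorem OperatorMonotone.mul_le_mul_of_le (hf : OperatorMonotone f)
    (hf0 : ∀ x, 0 ≤ x → 0 ≤ f x) {p q : ℝ} (hp : 0 < p) (hpq : p ≤ q) :
    p * f q ≤ q * f p := by
  have hq : 0 < q := hp.trans_le hpq
  rcases (hf0 q hq.le).eq_or_lt with hfq | hfq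
  · rw [← hfq, mul_zero]
    exact mul_nonneg hq.le (hf0 p hp.le)
  suffices h : ∀ t < p / q, t * f q ≤ f p by
    have := le_of_forall_lt_imp_le_of_dense fun t ht => (le_div_iff₀ hfq).mpr (h t ht)
    rw [div_le_div_iff₀ hq hfq] at this
    linarith
  intro t ht
  rcases lt_or_ge t 0 with ht0 | ht0
  · nlinarith [hf0 p hp.le]
  have hqt : q * t < p := by rwa [lt_div_iff₀ hq, mul_comm] at ht
  -- `T` is the least `a` with `diag(a, p) ⪰ q vvᵀ` for the unit vector `v = (√(1 - t), √t)`.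
  set T := q * p / (p - q * t)
  have hT : T * (p - q * t) = q * p := div_mul_cancel₀ _ (sub_pos.mpr hqt).ne'
  have hqT : q ≤ T := by
    refine le_of_mul_le_mul_right ?_ (sub_pos.mpr hqt)
    rw [hT]
    nlinarith [mul_nonneg (mul_nonneg hq.le hq.le) ht0]
  have ht1 : t ≤ 1 := by nlinarith
  have hc : √(1 - t) ^ 2 = 1 - t := Real.sq_sqrt (by linarith)
  have hs : √t ^ 2 = t := Real.sq_sqrt ht0
  have key := hf.mul_add_mul_le_of_fin_two (hf0 0 le_rfl) (c := √(1 - t)) (s := √t)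
    (by rw [hc, hs]; ring) hp.le (hpq.trans hqT) hq.le (by rw [hc]; nlinarith)
    (by rw [hs]; linarith) (by rw [hc, hs]; nlinarith [mul_nonneg (mul_nonneg hq.le hp.le) ht0])
  rw [hc, hs] at key
  have hfT : f q ≤ f T := hf.monotoneOn hq.le (hq.le.trans hqT) hqT
  nlinarith [mul_nonneg (hf0 p hp.le) (sub_nonneg.mpr ht1)]

theorem OperatorMonotone.antitoneOn_div (hf : OperatorMonotone f)
    (hf0 : ∀ x, 0 ≤ x → 0 ≤ f x) : AntitoneOn (fun x => f x / x) (Set.Ioi 0) := by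
  intro p hp q hq hpq
  show f q / q ≤ f p / p
  rw [div_le_div_iff₀ hq hp]
  linarith [hf.mul_le_mul_of_le hf0 hp hpq]
end OperatorMonotone

section Scalar
variable {g : ℝ → ℝ}

theorem div_mul_le_of_antitoneOn_div (hg0 : ∀ x, 0 ≤ x → 0 ≤ g x)
    (hg : AntitoneOn (fun x => g x / x) (Set.Ioi 0)) {x c : ℝ} (hc : 0 < c) (hx : 0 ≤ x)
    (hxc : x ≤ c) : g c / c * x ≤ g x := by
  rcases hx.eq_or_lt with rfl | hx
  · simpa using hg0 0 le_rfl
  · exact (le_div_iff₀ hx).mp (hg hx hc hxc)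

theorem sub_le_div_mul_sub (hg0 : ∀ x, 0 ≤ x → 0 ≤ g x)
    (hg : AntitoneOn (fun x => g x / x) (Set.Ioi 0)) {x y : ℝ} (hx : 0 < x) (hy : 0 ≤ y)
    (hyx : y ≤ x) : g x - g y ≤ g x / x * (x - y) := by
  have hgy : g x / x * y ≤ g y := div_mul_le_of_antitoneOn_div hg0 hg hx hy hyx
  have : g x / x * (x - y) = g x - g x / x * y := by field_simp
  linarith

theorem sum_sub_le_of_antitoneOn_div (hg0 : ∀ x, 0 ≤ x → 0 ≤ g x)
    (hg : AntitoneOn (fun x => g x / x) (Set.Ioi 0)) {n k : ℕ} {μ ν : Fin n → ℝ}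
    (hμ : Antitone μ) (hν : 0 ≤ ν) (hνμ : ν ≤ μ) {ε : ℝ} (hε : 0 ≤ ε)
    (h : ∑ i : Fin n with i.val < k, (μ i - ν i) ≤ ε * ∑ i : Fin n with k ≤ i.val, μ i) :
    ∑ i : Fin n with i.val < k, (g (μ i) - g (ν i)) ≤
      ε * ∑ i : Fin n with k ≤ i.val, g (μ i) := by
  have hμ0 : 0 ≤ μ := hν.trans hνμ
  have htail : 0 ≤ ∑ i : Fin n with k ≤ i.val, g (μ i) :=
    sum_nonneg fun i _ => hg0 _ (hμ0 i)
  by_cases hdeg : ∀ j : Fin n, k ≤ j.val → μ j = 0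
  · have hhead : ∑ i : Fin n with i.val < k, (μ i - ν i) ≤ 0 := by
      simpa [sum_eq_zero fun j hj => hdeg j (mem_filter.mp hj).2] using h
    have hμν := (sum_eq_zero_iff_of_nonneg fun i _ => sub_nonneg.mpr (hνμ i)).mp
      (hhead.antisymm (sum_nonneg fun i _ => sub_nonneg.mpr (hνμ i)))
    rw [sum_eq_zero fun i hi => by rw [sub_eq_zero.mp (hμν i hi), sub_self]]
    exact mul_nonneg hε htail
  push Not at hdeg
  obtain ⟨j, hkj, hμj⟩ := hdeg
  set K : Fin n := ⟨k, hkj.trans_lt j.isLt⟩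
  have hK : 0 < μ K := ((hμ0 j).lt_of_ne' hμj).trans_le (hμ (Fin.le_def.mpr hkj))
  set r := g (μ K) / μ K
  have hr : 0 ≤ r := div_nonneg (hg0 _ hK.le) hK.le
  calc ∑ i : Fin n with i.val < k, (g (μ i) - g (ν i))
      ≤ ∑ i : Fin n with i.val < k, r * (μ i - ν i) := by
        refine sum_le_sum fun i hi => ?_
        have hiK : μ K ≤ μ i := hμ (Fin.le_def.mpr (mem_filter.mp hi).2.le)
        calc g (μ i) - g (ν i) ≤ g (μ i) / μ i * (μ i - ν i) :=
              sub_le_div_mul_sub hg0 hg (hK.trans_le hiK) (hν i) (hνμ i)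
          _ ≤ r * (μ i - ν i) :=
              mul_le_mul_of_nonneg_right (hg hK (hK.trans_le hiK) hiK) (sub_nonneg.mpr (hνμ i))
    _ ≤ r * (ε * ∑ i : Fin n with k ≤ i.val, μ i) := by
        rw [← mul_sum]
        exact mul_le_mul_of_nonneg_left h hr
    _ = ε * ∑ i : Fin n with k ≤ i.val, r * μ i := by rw [mul_left_comm, mul_sum]
    _ ≤ ε * ∑ i : Fin n with k ≤ i.val, g (μ i) := by
        refine mul_le_mul_of_nonneg_left (sum_le_sum fun i hi => ?_) hε
        exact div_mul_le_of_antitoneOn_div hg0 hg hK (hμ0 i)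
          (hμ (Fin.le_def.mpr (mem_filter.mp hi).2))
end Scalar

section Truncation

variable {n : ℕ} {U : Matrix (Fin n) (Fin n) ℝ}

theorem IsSpectralDecomp.trace_eq {M : Matrix (Fin n) (Fin n) ℝ} {μ : Fin n → ℝ}
    (h : IsSpectralDecomp M U μ) : M.trace = ∑ i, μ i := by
  rw [h.2.2, trace_mul_diagonal_mul_transpose h.1]

theorem mul_diagonal_mul_transpose_sub_trunc (k : ℕ) (U : Matrix (Fin n) (Fin n) ℝ)
    (g : Fin n → ℝ) :
    U * diagonal g * Uᵀ - trunc k U g =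
      U * diagonal (fun i : Fin n => if (i : ℕ) < k then 0 else g i) * Uᵀ := by
  rw [trunc, ← Matrix.sub_mul, ← Matrix.mul_sub, diagonal_sub]
  congr 3
  ext i
  split_ifs <;> ring

theorem trace_trunc (hU : Uᵀ * U = 1) (k : ℕ) (g : Fin n → ℝ) :
    (trunc k U g).trace = ∑ i : Fin n with i.val < k, g i := by
  rw [trunc, trace_mul_diagonal_mul_transpose hU, sum_filter]

theorem nuclearNorm_sub_trunc {M : Matrix (Fin n) (Fin n) ℝ} {k : ℕ} {g : Fin n → ℝ}
    (hU : Uᵀ * U = 1) (hM : (M - U * diagonal g * Uᵀ).PosSemidef)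
    (hg : ∀ i : Fin n, k ≤ i.val → 0 ≤ g i) :
    nuclearNorm (M - trunc k U g) = M.trace - ∑ i : Fin n with i.val < k, g i := by
  have htail : (U * diagonal g * Uᵀ - trunc k U g).PosSemidef := by
    rw [mul_diagonal_mul_transpose_sub_trunc]
    refine posSemidef_mul_diagonal_mul_transpose U fun i => ?_
    dsimp only
    split_ifs with hi
    exacts [le_rfl, hg i (not_lt.mp hi)]
  rw [← sub_add_sub_cancel M (U * diagonal g * Uᵀ), nuclearNorm_of_posSemidef (hM.add htail),
    sub_add_sub_cancel, trace_sub, trace_trunc hU]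

theorem sub_sum_filter_le_one_add_mul_iff (a b : Fin n → ℝ) (k : ℕ) (ε : ℝ) :
    ∑ i, a i - ∑ i : Fin n with i.val < k, b i ≤
        (1 + ε) * (∑ i, a i - ∑ i : Fin n with i.val < k, a i) ↔
      ∑ i : Fin n with i.val < k, (a i - b i) ≤ ε * ∑ i : Fin n with k ≤ i.val, a i := by
  rw [← sum_filter_add_sum_filter_not univ (fun i : Fin n => i.val < k) a, sum_sub_distrib]
  simp only [not_lt]
  constructor <;> intro h <;> linarith

end Truncation

theorem nuclear_nystrom_to_funNystrom_general
    (n k : ℕ) (ε : ℝ) (hε : 0 ≤ ε)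
    (A Ahat U V : Matrix (Fin n) (Fin n) ℝ) (μ ν : Fin n → ℝ)
    (hA : A.PosSemidef) (hAhat : Ahat.PosSemidef) (hAAhat : (A - Ahat).PosSemidef)
    (hdecA : IsSpectralDecomp A U μ) (hdecAhat : IsSpectralDecomp Ahat V ν)
    (hnear : nuclearNorm (A - trunc k V ν) ≤ (1 + ε) * nuclearNorm (A - trunc k U μ))
    (f : ℝ → ℝ) (hfmono : OperatorMonotone f)
    (hfnn : ∀ x : ℝ, 0 ≤ x → 0 ≤ f x) :
    nuclearNorm (U * Matrix.diagonal (f ∘ μ) * Uᵀ - trunc k V (f ∘ ν)) ≤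
      (1 + ε) * nuclearNorm (U * Matrix.diagonal (f ∘ μ) * Uᵀ - trunc k U (f ∘ μ)) := by
  have hν : 0 ≤ ν := hdecAhat.nonneg hAhat
  have hνμ : ν ≤ μ := hdecA.le_of_posSemidef_sub hdecAhat hAAhat
  have hμ : 0 ≤ μ := hν.trans hνμ
  have hfAfAhat := hfmono n A Ahat U V μ ν hdecA hdecAhat hA hAhat hAAhat
  have hzero (g : Fin n → ℝ) : (U * diagonal g * Uᵀ - U * diagonal g * Uᵀ).PosSemidef := by
    rw [sub_self]
    exact .zero
  rw [nuclearNorm_sub_trunc hdecAhat.1 (by rwa [← hdecAhat.2.2]) (fun i _ => hν i),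
    nuclearNorm_sub_trunc hdecA.1 (hdecA.2.2 ▸ hzero μ) (fun i _ => hμ i),
    hdecA.trace_eq, sub_sum_filter_le_one_add_mul_iff] at hnear
  rw [nuclearNorm_sub_trunc hdecAhat.1 hfAfAhat (fun i _ => hfnn _ (hν i)),
    nuclearNorm_sub_trunc hdecA.1 (hzero (f ∘ μ)) (fun i _ => hfnn _ (hμ i)),
    trace_mul_diagonal_mul_transpose hdecA.1, sub_sum_filter_le_one_add_mul_iff]
  exact sum_sub_le_of_antitoneOn_div hfnn (hfmono.antitoneOn_div hfnn) hdecA.2.1 hν hνμ hε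
    hnear

/-- If `A ⪰ Â ⪰ 0` and the rank-`k` truncation of `Â` is a `(1+ε)`-near-optimal
rank-`k` approximation of `A` in nuclear norm, then for every continuous operator monotone
`f : [0,∞) → [0,∞)`, the rank-`k` truncation of `f(Â)` is a `(1+ε)`-near-optimal rank-`k`
approximation of `f(A)` in nuclear norm. -/
theorem nuclear_nystrom_to_funNystrom
    (n k : ℕ) (hk : 1 ≤ k) (hkn : k < n) (ε : ℝ) (hε : 0 ≤ ε)
    (A Ahat U V : Matrix (Fin n) (Fin n) ℝ) (μ ν : Fin n → ℝ)
    (hA : A.PosSemidef) (hAhat : Ahat.PosSemidef) (hAAhat : (A - Ahat).PosSemidef)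
    (hdecA : IsSpectralDecomp A U μ) (hdecAhat : IsSpectralDecomp Ahat V ν)
    (hnear : nuclearNorm (A - trunc k V ν) ≤ (1 + ε) * nuclearNorm (A - trunc k U μ))
    (f : ℝ → ℝ) (hfc : ContinuousOn f (Set.Ici 0)) (hfmono : OperatorMonotone f)
    (hfnn : ∀ x : ℝ, 0 ≤ x → 0 ≤ f x) :
    nuclearNorm (U * Matrix.diagonal (f ∘ μ) * Uᵀ - trunc k V (f ∘ ν)) ≤
      (1 + ε) * nuclearNorm (U * Matrix.diagonal (f ∘ μ) * Uᵀ - trunc k U (f ∘ μ)) :=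
  nuclear_nystrom_to_funNystrom_general n k ε hε A Ahat U V μ ν hA hAhat hAAhat hdecA hdecAhat hnear
    f hfmono hfnn
end

section
/- Let ε ∈ [0,1] and let λ₁ ≥ λ₂ ≥ … ≥ λ_k ≥ λ_{k+1} ≥ 0 be real numbers. Suppose λ̂₁, …, λ̂_k ≥ 0 satisfy 0 ≤ λᵢ − λ̂ᵢ ≤ ε·λ_{k+1} for every i = 1, …, k. Then for every nondecreasing concave function f : [0,∞) → [0,∞), 0 ≤ f(λᵢ) − f(λ̂ᵢ) ≤ ε·f(λ_{k+1}) for every i = 1, …, k. -/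
/-!
Write `d = λᵢ - λ̂ᵢ ∈ [0, ελ_{k+1}]`. Increments of a concave function over intervals of a fixed
length `d` decrease as the interval moves right, and `λ̂ᵢ ≥ λ_{k+1} - ελ_{k+1}`, so
`f(λᵢ) - f(λ̂ᵢ) ≤ f((1-ε)λ_{k+1} + d) - f((1-ε)λ_{k+1}) ≤ f(λ_{k+1}) - f((1-ε)λ_{k+1})`,
and concavity between `0` and `λ_{k+1}` together with `f 0 ≥ 0` bounds the last difference by
`ε f(λ_{k+1})`.
-/

section Concave

variable {𝕜 E β : Type*} [Field 𝕜] [LinearOrder 𝕜] [IsStrictOrderedRing 𝕜]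
  [AddCommMonoid β] [PartialOrder β] [IsOrderedAddMonoid β] [Module 𝕜 β]

theorem ConcaveOn.map_add_add_map_le_map_add_map_add {s : Set 𝕜} {f : 𝕜 → β}
    (hf : ConcaveOn 𝕜 s f) {x y d : 𝕜} (hy : y ∈ s) (hxd : x + d ∈ s) (hyx : y ≤ x) (hd : 0 ≤ d) :
    f (x + d) + f y ≤ f x + f (y + d) := by
  rcases (show y ≤ x + d by linarith).eq_or_lt with hyxd | hyxd
  · obtain rfl : x = y := by linarith
    obtain rfl : d = 0 := by linarith
    rw [add_zero, add_comm]
  -- `x` and `y + d` are the two convex combinations of `y` and `x + d` with swapped weights.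
  have hL : 0 < x + d - y := sub_pos.2 hyxd
  set a := d / (x + d - y) with ha
  set b := (x - y) / (x + d - y) with hb
  have ha0 : 0 ≤ a := div_nonneg hd hL.le
  have hb0 : 0 ≤ b := div_nonneg (sub_nonneg.2 hyx) hL.le
  have hab : a + b = 1 := by rw [ha, hb]; field_simp; ring
  have hx := hf.2 hy hxd ha0 hb0 hab
  have hyd := hf.2 hy hxd hb0 ha0 (by rw [add_comm, hab])
  rw [show a • y + b • (x + d) = x by simp only [ha, hb, smul_eq_mul]; field_simp; ring] at hx
  rw [show b • y + a • (x + d) = y + d by simp only [ha, hb, smul_eq_mul]; field_simp; ring]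
    at hyd
  calc f (x + d) + f y = (a • f y + b • f (x + d)) + (b • f y + a • f (x + d)) := by
        rw [add_add_add_comm, ← add_smul, add_comm (b • f (x + d)), ← add_smul, hab,
          one_smul, one_smul, add_comm]
    _ ≤ f x + f (y + d) := add_le_add hx hyd

theorem ConcaveOn.smul_le_map_smul [AddCommGroup E] [Module 𝕜 E] [PosSMulMono 𝕜 β]
    {s : Set E} {f : E → β} (hf : ConcaveOn 𝕜 s f) (h0 : 0 ∈ s) (hf0 : 0 ≤ f 0) {x : E}
    (hx : x ∈ s) {t : 𝕜} (ht0 : 0 ≤ t) (ht1 : t ≤ 1) : t • f x ≤ f (t • x) := by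
  have h := hf.2 hx h0 ht0 (sub_nonneg.2 ht1) (add_sub_cancel t 1)
  rw [smul_zero, add_zero] at h
  exact (le_add_of_nonneg_right (smul_nonneg (sub_nonneg.2 ht1) hf0)).trans h

end Concave

theorem ConcaveOn.map_sub_map_mem_Icc_of_sub_le_mul {f : ℝ → ℝ}
    (hconc : ConcaveOn ℝ (Set.Ici 0) f) (hmono : MonotoneOn f (Set.Ici 0)) (hf0 : 0 ≤ f 0)
    {ε μ a b : ℝ} (hε0 : 0 ≤ ε) (hε1 : ε ≤ 1) (hμ : 0 ≤ μ) (hμb : μ ≤ b) (hab : 0 ≤ b - a)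
    (hba : b - a ≤ ε * μ) :
    f b - f a ∈ Set.Icc 0 (ε * f μ) := by
  have hc : 0 ≤ (1 - ε) * μ := mul_nonneg (sub_nonneg.2 hε1) hμ
  have hca : (1 - ε) * μ ≤ a := by linarith
  refine ⟨sub_nonneg.2 (hmono (hc.trans hca) (hμ.trans hμb) (by linarith)), ?_⟩
  have hshift := hconc.map_add_add_map_le_map_add_map_add (x := a) (d := b - a) hc
    (by simp only [add_sub_cancel, Set.mem_Ici]; linarith) hca hab
  rw [add_sub_cancel] at hshift
  have hscale := hconc.smul_le_map_smul Set.self_mem_Ici hf0 (Set.mem_Ici.2 hμ)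
    (sub_nonneg.2 hε1) (sub_le_self 1 hε0)
  rw [smul_eq_mul, smul_eq_mul] at hscale
  calc f b - f a ≤ f ((1 - ε) * μ + (b - a)) - f ((1 - ε) * μ) := by linarith
    _ ≤ f μ - f ((1 - ε) * μ) :=
      sub_le_sub_right (hmono (add_nonneg hc hab) hμ (by linarith)) _
    _ ≤ ε * f μ := by linarith

theorem eigenvalue_transfer_additive_general
    (k : ℕ) (ε : ℝ) (hε0 : 0 ≤ ε) (hε1 : ε ≤ 1)
    (lam : Fin (k + 1) → ℝ) (hlam : Antitone lam) (hlamnn : 0 ≤ lam (Fin.last k))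
    (lamhat : Fin k → ℝ)
    (happrox : ∀ i : Fin k, 0 ≤ lam i.castSucc - lamhat i ∧
      lam i.castSucc - lamhat i ≤ ε * lam (Fin.last k))
    (f : ℝ → ℝ) (hfmono : MonotoneOn f (Set.Ici 0)) (hfconc : ConcaveOn ℝ (Set.Ici 0) f)
    (hfnn : ∀ x : ℝ, 0 ≤ x → 0 ≤ f x) :
    ∀ i : Fin k, 0 ≤ f (lam i.castSucc) - f (lamhat i) ∧
      f (lam i.castSucc) - f (lamhat i) ≤ ε * f (lam (Fin.last k)) := fun i ↦
  hfconc.map_sub_map_mem_Icc_of_sub_le_mul hfmono (hfnn 0 le_rfl) hε0 hε1 hlamnn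
    (hlam (Fin.le_last _)) (happrox i).1 (happrox i).2

/-- Eigenvalue transfer: if `λ₁ ≥ … ≥ λ_k ≥ λ_{k+1} ≥ 0` and estimates
`λ̂ᵢ ≥ 0` satisfy `0 ≤ λᵢ − λ̂ᵢ ≤ ε·λ_{k+1}` for `i = 1,…,k`, then for every nondecreasing
concave `f : [0,∞) → [0,∞)`, `0 ≤ f(λᵢ) − f(λ̂ᵢ) ≤ ε·f(λ_{k+1})` for `i = 1,…,k`. -/
theorem eigenvalue_transfer_additive
    (k : ℕ) (hk : 1 ≤ k) (ε : ℝ) (hε0 : 0 ≤ ε) (hε1 : ε ≤ 1)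
    (lam : Fin (k + 1) → ℝ) (hlam : Antitone lam) (hlamnn : 0 ≤ lam (Fin.last k))
    (lamhat : Fin k → ℝ) (hlamhatnn : ∀ i, 0 ≤ lamhat i)
    (happrox : ∀ i : Fin k, 0 ≤ lam i.castSucc - lamhat i ∧
      lam i.castSucc - lamhat i ≤ ε * lam (Fin.last k))
    (f : ℝ → ℝ) (hfmono : MonotoneOn f (Set.Ici 0)) (hfconc : ConcaveOn ℝ (Set.Ici 0) f)
    (hfnn : ∀ x : ℝ, 0 ≤ x → 0 ≤ f x) :
    ∀ i : Fin k, 0 ≤ f (lam i.castSucc) - f (lamhat i) ∧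
      f (lam i.castSucc) - f (lamhat i) ≤ ε * f (lam (Fin.last k)) :=
  eigenvalue_transfer_additive_general k ε hε0 hε1 lam hlam hlamnn lamhat happrox f hfmono hfconc
    hfnn
end

section
/- Let p ≥ 1, let 1 ≤ k < n, and let λ₁ ≥ λ₂ ≥ … ≥ λₙ ≥ 0 be real numbers with λ_k > 0. Let δ₁, …, δ_k ∈ [0,1], let ε ≥ 0, and suppose Σ_{i=1}^{k} δᵢ λᵢ^p ≤ ε Σ_{j=k+1}^{n} λⱼ^p. Then for every concave function f : [0,∞) → [0,∞), Σ_{i=1}^{k} δᵢ f(λᵢ)^p ≤ ε Σ_{j=k+1}^{n} f(λⱼ)^p. -/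
open Finset Set

/-! The chord of `f` from the origin to `(L, f L)`, with `L = λ_k`, has slope `c = f L / L`.
Since `f x / x` is nonincreasing, `f ≤ c · id` on `[L, ∞)` and `f ≥ c · id` on `[0, L]`; raising to
the power `p`, the head sum is at most `c ^ p` times the `λ^p` head sum and the tail sum at least
`c ^ p` times the `λ^p` tail sum, so the hypothesis transfers. -/
lemma ConcaveOn.mul_apply_le_mul_apply {f : ℝ → ℝ} (hf : ConcaveOn ℝ (Ici 0) f) (hf0 : 0 ≤ f 0)
    {x y : ℝ} (hy : 0 ≤ y) (hyx : y ≤ x) (hx : 0 < x) :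
    y * f x ≤ x * f y := by
  have hyx' : y / x ≤ 1 := (div_le_one hx).2 hyx
  have hchord := hf.2 (mem_Ici.2 hx.le) (mem_Ici.2 le_rfl) (div_nonneg hy hx.le)
    (sub_nonneg.2 hyx') (add_sub_cancel _ _)
  have hpoint : (y / x) • x + (1 - y / x) • (0 : ℝ) = y := by
    simp only [smul_eq_mul, mul_zero, add_zero]; field_simp
  rw [hpoint, smul_eq_mul, smul_eq_mul] at hchord
  have hscaled : y / x * f x ≤ f y := by nlinarith [sub_nonneg.2 hyx']
  calc y * f x = x * (y / x * f x) := by field_simp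
    _ ≤ x * f y := mul_le_mul_of_nonneg_left hscaled hx.le

lemma ConcaveOn.apply_le_div_mul_of_le {f : ℝ → ℝ} (hf : ConcaveOn ℝ (Ici 0) f) (hf0 : 0 ≤ f 0)
    {L x : ℝ} (hL : 0 < L) (hLx : L ≤ x) : f x ≤ f L / L * x := by
  rw [div_mul_eq_mul_div, le_div_iff₀ hL, mul_comm (f x), mul_comm (f L)]
  exact hf.mul_apply_le_mul_apply hf0 hL.le hLx (hL.trans_le hLx)

lemma ConcaveOn.div_mul_le_apply_of_le {f : ℝ → ℝ} (hf : ConcaveOn ℝ (Ici 0) f) (hf0 : 0 ≤ f 0)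
    {L x : ℝ} (hL : 0 < L) (hx : 0 ≤ x) (hxL : x ≤ L) : f L / L * x ≤ f x := by
  rw [div_mul_eq_mul_div, div_le_iff₀ hL, mul_comm (f L), mul_comm (f x)]
  exact hf.mul_apply_le_mul_apply hf0 hx hxL hL

lemma sum_mul_le_mul_sum_of_le_const_mul {ι : Type*} (s t : Finset ι) {w a g : ι → ℝ}
    {c ε : ℝ} (hc : 0 ≤ c) (hε : 0 ≤ ε) (hw : ∀ i ∈ s, 0 ≤ w i)
    (hgs : ∀ i ∈ s, g i ≤ c * a i) (hgt : ∀ j ∈ t, c * a j ≤ g j)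
    (ha : ∑ i ∈ s, w i * a i ≤ ε * ∑ j ∈ t, a j) :
    ∑ i ∈ s, w i * g i ≤ ε * ∑ j ∈ t, g j :=
  calc ∑ i ∈ s, w i * g i ≤ ∑ i ∈ s, c * (w i * a i) :=
        sum_le_sum fun i hi => by
          rw [mul_left_comm]; exact mul_le_mul_of_nonneg_left (hgs i hi) (hw i hi)
    _ = c * ∑ i ∈ s, w i * a i := (mul_sum _ _ _).symm
    _ ≤ c * (ε * ∑ j ∈ t, a j) := mul_le_mul_of_nonneg_left ha hc
    _ = ε * ∑ j ∈ t, c * a j := by rw [mul_sum, mul_sum, mul_sum]; simp only [mul_left_comm]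
    _ ≤ ε * ∑ j ∈ t, g j := mul_le_mul_of_nonneg_left (sum_le_sum hgt) hε

/-- Key scalar inequality: if `λ₁ ≥ … ≥ λₙ ≥ 0` with `λ_k > 0`,
`δ₁,…,δ_k ∈ [0,1]`, `ε ≥ 0`, and `Σ_{i≤k} δᵢ λᵢ^p ≤ ε Σ_{j>k} λⱼ^p`, then for every concave
`f : [0,∞) → [0,∞)`, `Σ_{i≤k} δᵢ f(λᵢ)^p ≤ ε Σ_{j>k} f(λⱼ)^p`. -/
theorem concave_weighted_power_sum_transfer
    (p : ℝ) (hp : 1 ≤ p) (n k : ℕ) (hkn : k < n)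
    (lam : Fin n → ℝ) (hlam : Antitone lam) (hlamnn : ∀ i, 0 ≤ lam i)
    (hlamk : 0 < lam ⟨k - 1, by omega⟩)
    (δ : Fin n → ℝ) (hδ : ∀ i : Fin n, (i : ℕ) < k → 0 ≤ δ i ∧ δ i ≤ 1)
    (ε : ℝ) (hε : 0 ≤ ε)
    (hsum : ∑ i ∈ Finset.univ.filter (fun i : Fin n => (i : ℕ) < k), δ i * lam i ^ p ≤
      ε * ∑ j ∈ Finset.univ.filter (fun j : Fin n => k ≤ (j : ℕ)), lam j ^ p)
    (f : ℝ → ℝ) (hfconc : ConcaveOn ℝ (Set.Ici 0) f) (hfnn : ∀ x : ℝ, 0 ≤ x → 0 ≤ f x) :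
    ∑ i ∈ Finset.univ.filter (fun i : Fin n => (i : ℕ) < k), δ i * f (lam i) ^ p ≤
      ε * ∑ j ∈ Finset.univ.filter (fun j : Fin n => k ≤ (j : ℕ)), f (lam j) ^ p := by
  set L := lam ⟨k - 1, by omega⟩
  have hf0 : 0 ≤ f 0 := hfnn 0 le_rfl
  have hc : 0 ≤ f L / L := div_nonneg (hfnn L hlamk.le) hlamk.le
  have hp0 : 0 ≤ p := zero_le_one.trans hp
  refine sum_mul_le_mul_sum_of_le_const_mul _ _ (Real.rpow_nonneg hc p) hε
    (fun i hi => (hδ i (mem_filter.1 hi).2).1) (fun i hi => ?_) (fun j hj => ?_) hsum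
  · have hLi : L ≤ lam i := hlam (Fin.le_def.2 (Nat.le_sub_one_of_lt (mem_filter.1 hi).2))
    rw [← Real.mul_rpow hc (hlamnn i)]
    exact Real.rpow_le_rpow (hfnn _ (hlamnn i))
      (hfconc.apply_le_div_mul_of_le hf0 hlamk hLi) hp0
  · have hjL : lam j ≤ L := hlam (Fin.le_def.2 ((Nat.sub_le k 1).trans (mem_filter.1 hj).2))
    rw [← Real.mul_rpow hc (hlamnn j)]
    exact Real.rpow_le_rpow (mul_nonneg hc (hlamnn j))
      (hfconc.div_mul_le_apply_of_le hf0 hlamk (hlamnn j) hjL) hp0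
end
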